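/- Let Ω be a finite state space, A a finite action set, μ₀ ∈ Δ(Ω) a full-support prior, and v : A × Ω → [0,1] the sender's utility. Fix a receiver utility u giving best-reply sets B(a) ⊆ Δ(Ω). Suppose π is a splitting of μ₀ into finitely many posteriors {μᵢ} with weights {αᵢ}, and suppose some posterior μ_k is not an extreme point of B(a_k), where a_k is a sender-optimal best reply at μ_k. Then there exists a splitting π' of μ₀ supported on posteriors that replaces μ_k by extreme points of B(a_k) (all still inducing a_k as a best reply) such that the sender's expected utility under π' (with sender-preferred tie-breaking) is at least that under π. -/

import Mathlib

/-- The receiver's best replies at belief `μ`. -/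
def optSet {N : ℕ} {A : Type*} (u : A → Fin N → ℝ) (μ : EuclideanSpace ℝ (Fin N)) : Set A :=
  {a | ∀ b, ∑ ω, μ ω * u b ω ≤ ∑ ω, μ ω * u a ω}

/-- The sender's indirect utility at belief `μ` (sender-preferred tie-breaking). -/
noncomputable def senderVal {N : ℕ} {A : Type*} (u v : A → Fin N → ℝ)
    (μ : EuclideanSpace ℝ (Fin N)) : ℝ :=
  sSup {t | ∃ a ∈ optSet u μ, t = ∑ ω, μ ω * v a ω}

/-!
The best-reply region `B(a)` is a polytope: it is cut out of the simplex by finitely many linear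
inequalities. An extreme point of a polyhedron is determined by the set of inequalities that are
tight at it, so `B(a)` has finitely many extreme points; their convex hull is therefore closed, and
Krein–Milman gives `B(a) = conv (ext B(a))`. Writing `μ_k` as a convex combination of extreme points
and splitting its weight `α_k` accordingly yields a new splitting of `μ₀`. The action `a_k` remains
a best reply at every new posterior and its payoff is linear in the belief, so the sender's value
at `μ_k` is at most the average of her values at the new posteriors.
-/

open Set Filter Topology

section Polyhedron

variable {E C : Type*} [AddCommGroup E] [Module ℝ E]

def polyhedron (f : C → E →ₗ[ℝ] ℝ) (b : C → ℝ) : Set E :=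
  {x | ∀ c, f c x ≤ b c}

variable (f : C → E →ₗ[ℝ] ℝ) (b : C → ℝ)

theorem convex_polyhedron : Convex ℝ (polyhedron f b) := by
  simpa only [polyhedron, ofPred_forall] using
    convex_iInter fun c => convex_halfSpace_le (f c).isLinear (b c)

theorem isClosed_polyhedron [TopologicalSpace E] [IsTopologicalAddGroup E] [ContinuousSMul ℝ E]
    [T2Space E] [FiniteDimensional ℝ E] : IsClosed (polyhedron f b) := by
  simpa only [polyhedron, ofPred_forall] using
    isClosed_iInter fun c => isClosed_le (f c).continuous_of_finiteDimensional continuous_const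

/-- Moving from `x` towards or away from `y` keeps the constraints tight at `x` tight, and the
others slack for a short while; so `x` is the midpoint of a nondegenerate segment in the
polyhedron unless `y = x`. -/
theorem eq_of_mem_extremePoints_polyhedron [Finite C] {x y : E}
    (hx : x ∈ (polyhedron f b).extremePoints ℝ)
    (htight : {c | f c x = b c} ⊆ {c | f c y = b c}) : x = y := by
  set d := y - x
  have hnear : ∀ᶠ t in 𝓝 (0 : ℝ), x + t • d ∈ polyhedron f b := by
    refine eventually_all.2 fun c => ?_
    have hline : ∀ t : ℝ, f c (x + t • d) = f c x + t * f c d := by simp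
    simp only [hline]
    rcases (hx.1 c).eq_or_lt with hcx | hcx
    · have hcy : f c y = b c := htight hcx
      have hd : f c d = 0 := by simp [d, hcx, hcy]
      exact Eventually.of_forall fun t => by simp [hd, hcx]
    · have hcont : Continuous fun t : ℝ => f c x + t * f c d := by fun_prop
      exact (hcont.continuousAt.eventually_lt continuousAt_const (by simpa using hcx)).mono
        fun t ht => ht.le
  have hboth : ∀ᶠ t in 𝓝[≠] (0 : ℝ),
      (x + t • d ∈ polyhedron f b ∧ x - t • d ∈ polyhedron f b) ∧ t ≠ 0 := by
    refine Eventually.and (Eventually.filter_mono nhdsWithin_le_nhds ?_) self_mem_nhdsWithin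
    refine hnear.and ((continuous_neg.tendsto' (0 : ℝ) 0 neg_zero).eventually hnear |>.mono ?_)
    simp [neg_smul, ← sub_eq_add_neg]
  obtain ⟨t, ⟨hplus, hminus⟩, ht⟩ := hboth.exists
  have hd : t • d = 0 := by simpa using hx.2 hminus hplus (mem_openSegment_sub_add x (t • d))
  exact (sub_eq_zero.1 ((smul_eq_zero.1 hd).resolve_left ht)).symm

theorem finite_extremePoints_polyhedron [Finite C] :
    ((polyhedron f b).extremePoints ℝ).Finite :=
  (Set.toFinite _).of_finite_image fun _ hx _ _ hxy =>
    eq_of_mem_extremePoints_polyhedron f b hx hxy.le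

theorem convexHull_extremePoints_polyhedron [Finite C] [TopologicalSpace E] [T2Space E]
    [IsTopologicalAddGroup E] [ContinuousSMul ℝ E] [LocallyConvexSpace ℝ E]
    (hcpt : IsCompact (polyhedron f b)) :
    convexHull ℝ ((polyhedron f b).extremePoints ℝ) = polyhedron f b := by
  conv_rhs => rw [← closure_convexHull_extremePoints hcpt (convex_polyhedron f b)]
  exact ((finite_extremePoints_polyhedron f b).isCompact_convexHull ℝ).isClosed.closure_eq.symm

end Polyhedron

section BestReply

variable {N : ℕ} {A : Type*}

def expect (w : Fin N → ℝ) : EuclideanSpace ℝ (Fin N) →ₗ[ℝ] ℝ where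
  toFun μ := ∑ ω, μ ω * w ω
  map_add' μ ν := by simp only [PiLp.add_apply, add_mul, Finset.sum_add_distrib]
  map_smul' c μ := by simp only [PiLp.smul_apply, smul_eq_mul, mul_assoc, Finset.mul_sum,
    RingHom.id_apply]

@[simp]
theorem expect_apply (w : Fin N → ℝ) (μ : EuclideanSpace ℝ (Fin N)) :
    expect w μ = ∑ ω, μ ω * w ω :=
  rfl

def bestReplyRegion (u : A → Fin N → ℝ) (a : A) : Set (EuclideanSpace ℝ (Fin N)) :=
  {μ | (∀ j, 0 ≤ μ j) ∧ ∑ j, μ j = 1 ∧ a ∈ optSet u μ}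

/-- The two `Bool`-indexed inequalities together encode `∑ j, μ j = 1`. -/
def bestReplyConstraint (u : A → Fin N → ℝ) (a : A) : Fin N ⊕ A ⊕ Bool → Fin N → ℝ
  | .inl j => -Pi.single j 1
  | .inr (.inl b) => u b - u a
  | .inr (.inr true) => 1
  | .inr (.inr false) => -1

def bestReplyBound : Fin N ⊕ A ⊕ Bool → ℝ
  | .inl _ => 0
  | .inr (.inl _) => 0
  | .inr (.inr true) => 1
  | .inr (.inr false) => -1

theorem bestReplyRegion_eq_polyhedron (u : A → Fin N → ℝ) (a : A) :
    bestReplyRegion u a =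
      polyhedron (fun c => expect (bestReplyConstraint u a c)) (bestReplyBound (A := A)) := by
  ext μ
  simp only [bestReplyRegion, optSet, polyhedron, mem_ofPred_eq, Sum.forall, Bool.forall_bool,
    expect_apply, bestReplyConstraint, bestReplyBound, Pi.neg_apply, Pi.sub_apply, Pi.one_apply,
    Pi.single_apply, mul_neg, mul_sub, mul_ite, mul_one, mul_zero, Finset.sum_neg_distrib,
    Finset.sum_sub_distrib, Finset.sum_ite_eq', Finset.mem_univ, if_true, neg_nonpos, sub_nonpos,
    neg_le_neg_iff]
  rw [le_antisymm_iff]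
  tauto

theorem isCompact_bestReplyRegion (u : A → Fin N → ℝ) (a : A) :
    IsCompact (bestReplyRegion u a) := by
  refine ((isCompact_stdSimplex ℝ (Fin N)).image (PiLp.continuous_toLp 2 _)).of_isClosed_subset
    ?_ ?_
  · rw [bestReplyRegion_eq_polyhedron]
    exact isClosed_polyhedron _ _
  · rintro μ ⟨h0, h1, -⟩
    exact ⟨μ.ofLp, ⟨h0, h1⟩, rfl⟩

theorem convexHull_extremePoints_bestReplyRegion [Finite A] (u : A → Fin N → ℝ) (a : A) :
    convexHull ℝ ((bestReplyRegion u a).extremePoints ℝ) = bestReplyRegion u a := by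
  have hcpt := isCompact_bestReplyRegion u a
  rw [bestReplyRegion_eq_polyhedron] at hcpt ⊢
  exact convexHull_extremePoints_polyhedron _ _ hcpt

end BestReply

section SenderValue

variable {N : ℕ} {A : Type*} {u v : A → Fin N → ℝ} {μ : EuclideanSpace ℝ (Fin N)} {a : A}

theorem senderVal_eq_of_forall_le (ha : a ∈ optSet u μ)
    (hmax : ∀ b ∈ optSet u μ, ∑ ω, μ ω * v b ω ≤ ∑ ω, μ ω * v a ω) :
    senderVal u v μ = ∑ ω, μ ω * v a ω :=
  IsGreatest.csSup_eq ⟨⟨a, ha, rfl⟩, by rintro t ⟨b, hb, rfl⟩; exact hmax b hb⟩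

theorem le_senderVal [Finite A] (ha : a ∈ optSet u μ) :
    ∑ ω, μ ω * v a ω ≤ senderVal u v μ := by
  refine le_csSup (Set.Finite.bddAbove ?_) ⟨a, ha, rfl⟩
  refine (Set.finite_range fun b => ∑ ω, μ ω * v b ω).subset ?_
  rintro _ ⟨b, -, rfl⟩
  exact ⟨b, rfl⟩

theorem senderVal_le_sum_senderVal [Finite A] {ι : Type*} [Fintype ι] {γ : ι → ℝ}
    {p : ι → EuclideanSpace ℝ (Fin N)} (hγ : ∀ i, 0 ≤ γ i) (hp : ∀ i, a ∈ optSet u (p i))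
    (hμ : ∑ i, γ i • p i = μ) (ha : a ∈ optSet u μ)
    (hmax : ∀ b ∈ optSet u μ, ∑ ω, μ ω * v b ω ≤ ∑ ω, μ ω * v a ω) :
    senderVal u v μ ≤ ∑ i, γ i * senderVal u v (p i) :=
  calc senderVal u v μ = expect (v a) μ := senderVal_eq_of_forall_le ha hmax
    _ = ∑ i, γ i * expect (v a) (p i) := by simp only [← hμ, map_sum, map_smul, smul_eq_mul]
    _ ≤ ∑ i, γ i * senderVal u v (p i) :=
      Finset.sum_le_sum fun i _ => mul_le_mul_of_nonneg_left (le_senderVal (hp i)) (hγ i)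

end SenderValue

theorem sum_elim_subtype_ne_smul {ι κ E W : Type*} [Fintype ι] [DecidableEq ι] [Fintype κ]
    [AddCommGroup W] [Module ℝ W] (α : ι → ℝ) (μ : ι → E) (k : ι) (γ : κ → ℝ) (p : κ → E)
    (F : E → W) :
    ∑ x : {i // i ≠ k} ⊕ κ,
        Sum.elim (fun i : {i // i ≠ k} => α i) (fun m => α k * γ m) x •
          F (Sum.elim (fun i : {i // i ≠ k} => μ i) p x) =
      ∑ i, α i • F (μ i) + α k • (∑ m, γ m • F (p m) - F (μ k)) := by
  rw [Fintype.sum_sum_type, Fintype.sum_eq_add_sum_subtype_ne _ k]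
  simp only [Sum.elim_inl, Sum.elim_inr, mul_smul, smul_sub, Finset.smul_sum]
  abel

theorem stmt12_general (N I : ℕ) (A : Type*) [Fintype A] (u v : A → Fin N → ℝ)
    (μ₀ : EuclideanSpace ℝ (Fin N))
    (B : A → Set (EuclideanSpace ℝ (Fin N)))
    (hB : ∀ a, B a = {μ | (∀ j, 0 ≤ μ j) ∧ (∑ j, μ j = 1) ∧ a ∈ optSet u μ})
    (α : Fin I → ℝ) (hα : ∀ i, 0 < α i) (hαsum : ∑ i, α i = 1)
    (μ : Fin I → EuclideanSpace ℝ (Fin N))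
    (hμΔ : ∀ i, (∀ j, 0 ≤ μ i j) ∧ ∑ j, μ i j = 1)
    (havg : ∑ i, α i • μ i = μ₀)
    (k : Fin I) (ak : A)
    (hak : ak ∈ optSet u (μ k))
    (haksup : ∀ a ∈ optSet u (μ k), ∑ ω, μ k ω * v a ω ≤ ∑ ω, μ k ω * v ak ω) :
    ∃ (J : ℕ) (β : Fin J → ℝ) (ν : Fin J → EuclideanSpace ℝ (Fin N)),
      (∀ j, 0 ≤ β j) ∧ (∑ j, β j = 1) ∧ (∑ j, β j • ν j = μ₀) ∧
      (∀ j, (∃ i, i ≠ k ∧ ν j = μ i) ∨ ν j ∈ Set.extremePoints ℝ (B ak)) ∧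
      ∑ i, α i * senderVal u v (μ i) ≤ ∑ j, β j * senderVal u v (ν j) := by
  have hBk : B ak = bestReplyRegion u ak := hB ak
  have hμk : μ k ∈ convexHull ℝ ((B ak).extremePoints ℝ) := by
    rw [hBk, convexHull_extremePoints_bestReplyRegion]
    exact ⟨(hμΔ k).1, (hμΔ k).2, hak⟩
  obtain ⟨κ, _, γ, p, hγ, hγsum, hp, hγp⟩ := mem_convexHull_iff_exists_fintype.1 hμk
  have hsplit := senderVal_le_sum_senderVal hγ (fun m => (hBk ▸ (hp m).1).2.2) hγp hak haksup
  set β := Sum.elim (fun i : {i // i ≠ k} => α i) (fun m => α k * γ m)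
  set ν := Sum.elim (fun i : {i // i ≠ k} => μ i) p
  have hβ : ∀ x, 0 ≤ β x :=
    Sum.forall.2 ⟨fun i => (hα i).le, fun m => mul_nonneg (hα k).le (hγ m)⟩
  have hν : ∀ x, (∃ i, i ≠ k ∧ ν x = μ i) ∨ ν x ∈ (B ak).extremePoints ℝ :=
    Sum.forall.2 ⟨fun i => .inl ⟨i, i.2, rfl⟩, fun m => .inr (hp m)⟩
  have hβsum : ∑ x, β x = 1 := by
    simpa [β, hγsum, hαsum] using sum_elim_subtype_ne_smul α μ k γ p fun _ => (1 : ℝ)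
  have hβν : ∑ x, β x • ν x = μ₀ := by
    simpa [β, ν, hγp, havg] using sum_elim_subtype_ne_smul α μ k γ p id
  have hval : ∑ i, α i * senderVal u v (μ i) ≤ ∑ x, β x * senderVal u v (ν x) := by
    have hsum := sum_elim_subtype_ne_smul α μ k γ p (senderVal u v)
    simp only [smul_eq_mul] at hsum
    rw [hsum]
    exact le_add_of_nonneg_right (mul_nonneg (hα k).le (sub_nonneg.2 hsplit))
  let e := (Fintype.equivFin ({i // i ≠ k} ⊕ κ)).symm
  exact ⟨_, β ∘ e, ν ∘ e, fun j => hβ (e j), (e.sum_comp β).trans hβsum,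
    (e.sum_comp fun x => β x • ν x).trans hβν, fun j => hν (e j),
    hval.trans_eq (e.sum_comp fun x => β x * senderVal u v (ν x)).symm⟩

/-- A posterior that is not an extreme point of its best-reply region can be replaced by
extreme points of that region without lowering the sender's expected utility. -/
theorem stmt12 (N I : ℕ) (A : Type*) [Fintype A] (u v : A → Fin N → ℝ)
    (hv : ∀ a ω, v a ω ∈ Set.Icc (0:ℝ) 1)
    (μ₀ : EuclideanSpace ℝ (Fin N)) (hμ₀pos : ∀ j, 0 < μ₀ j) (hμ₀sum : ∑ j, μ₀ j = 1)
    (B : A → Set (EuclideanSpace ℝ (Fin N)))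
    (hB : ∀ a, B a = {μ | (∀ j, 0 ≤ μ j) ∧ (∑ j, μ j = 1) ∧ a ∈ optSet u μ})
    (α : Fin I → ℝ) (hα : ∀ i, 0 < α i) (hαsum : ∑ i, α i = 1)
    (μ : Fin I → EuclideanSpace ℝ (Fin N))
    (hμΔ : ∀ i, (∀ j, 0 ≤ μ i j) ∧ ∑ j, μ i j = 1)
    (havg : ∑ i, α i • μ i = μ₀)
    (k : Fin I) (ak : A)
    (hak : ak ∈ optSet u (μ k))
    (haksup : ∀ a ∈ optSet u (μ k), ∑ ω, μ k ω * v a ω ≤ ∑ ω, μ k ω * v ak ω)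
    (hnotext : μ k ∉ Set.extremePoints ℝ (B ak)) :
    ∃ (J : ℕ) (β : Fin J → ℝ) (ν : Fin J → EuclideanSpace ℝ (Fin N)),
      (∀ j, 0 ≤ β j) ∧ (∑ j, β j = 1) ∧ (∑ j, β j • ν j = μ₀) ∧
      (∀ j, (∃ i, i ≠ k ∧ ν j = μ i) ∨ ν j ∈ Set.extremePoints ℝ (B ak)) ∧
      ∑ i, α i * senderVal u v (μ i) ≤ ∑ j, β j * senderVal u v (ν j) :=
  stmt12_general N I A u v μ₀ B hB α hα hαsum μ hμΔ havg k ak hak haksup
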